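/- arXiv:1105.0841 — 4 statements merged into one kernel-verified Lean document; each statement's English description precedes it below -/
import Mathlib

section
/- Let n ≥ 2 and s ≥ 1 be integers and let a = (a_1,…,a_n) be a vector of positive integers with gcd(a_1,…,a_n) = 1. Then the s-Frobenius number satisfies the lower bound F_s(a) ≥ s^{1/(n-1)} · ((n-1)! · a_1·a_2·…·a_n)^{1/(n-1)} − (a_1 + a_2 + … + a_n). -/
/-!
Write `n = k + 1` and `N = F + aₙ`. Each `N - j` with `j < aₙ` exceeds `F`, so it has at least `s`
representations `z`. Dropping `zₙ` maps these `s · aₙ` vectors injectively into the lattice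
simplex `{w ∈ ℕᵏ | ∑ aᵢ wᵢ ≤ N}`, since `j` and `zₙ` are the remainder and quotient of
`N - ∑_{i<n} aᵢ zᵢ` by `aₙ`. The simplex has at most `(N + ∑_{i<n} aᵢ)ᵏ / (k! ∏_{i<n} aᵢ)` points,
the discrete form of its volume; this follows by induction on `k` and `N` from splitting off the
points with `w₁ = 0`, together with Bernoulli's inequality. Hence `s · k! · ∏ aᵢ ≤ (F + ∑ aᵢ)ᵏ`.
-/

open Finset Nat

def simplexPoints {k : ℕ} (a : Fin k → ℕ) (N : ℕ) : Set (Fin k → ℕ) :=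
  {w | ∑ i, a i * w i ≤ N}

def representations {n : ℕ} (a : Fin n → ℕ) (b : ℤ) : Set (Fin n → ℕ) :=
  {z | ∑ i, (a i : ℤ) * z i = b}

section SimplexPoints

variable {k : ℕ}

theorem simplexPoints_finite {a : Fin k → ℕ} (ha : ∀ i, 0 < a i) (N : ℕ) :
    (simplexPoints a N).Finite :=
  (Set.finite_Iic fun _ => N).subset fun w hw i =>
    calc w i ≤ a i * w i := Nat.le_mul_of_pos_left _ (ha i)
      _ ≤ ∑ j, a j * w j := single_le_sum (f := fun j => a j * w j) (by simp) (mem_univ i)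
      _ ≤ N := hw

theorem simplexPoints_inter_eq_image_cons (a : Fin (k + 1) → ℕ) (N : ℕ) :
    simplexPoints a N ∩ {w | w 0 = 0} = Fin.cons 0 '' simplexPoints (Fin.tail a) N := by
  ext w
  constructor
  · rintro ⟨hw, hw0 : w 0 = 0⟩
    refine ⟨Fin.tail w, ?_, by rw [← hw0, Fin.cons_self_tail]⟩
    simpa [simplexPoints, Fin.sum_univ_succ, hw0, Fin.tail] using hw
  · rintro ⟨v, hv, rfl⟩
    simpa [simplexPoints, Fin.sum_univ_succ, Fin.tail] using hv

theorem simplexPoints_add_diff_eq_image (a : Fin (k + 1) → ℕ) (N : ℕ) :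
    simplexPoints a (N + a 0) \ {w | w 0 = 0} =
      (· + Pi.single 0 1) '' simplexPoints a N := by
  have hsum (w : Fin (k + 1) → ℕ) :
      ∑ i, a i * (w + Pi.single 0 1 : Fin (k + 1) → ℕ) i = ∑ i, a i * w i + a 0 := by
    simp [mul_add, sum_add_distrib, Pi.single_apply]
  ext w
  constructor
  · rintro ⟨hw, hw0⟩
    obtain ⟨m, hm⟩ := Nat.exists_eq_succ_of_ne_zero hw0
    have hw' : Function.update w 0 m + Pi.single 0 1 = w := by
      ext i; by_cases hi : i = 0 <;> simp [hi, hm]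
    refine ⟨Function.update w 0 m, ?_, hw'⟩
    have := hsum (Function.update w 0 m)
    rw [hw'] at this
    simp only [simplexPoints, Set.mem_ofPred_eq] at hw ⊢
    omega
  · rintro ⟨v, hv, rfl⟩
    refine ⟨?_, by simp⟩
    simp only [simplexPoints, Set.mem_ofPred_eq] at hv ⊢
    rw [hsum]
    omega

theorem simplexPoints_diff_eq_empty {a : Fin (k + 1) → ℕ} {N : ℕ} (hN : N < a 0) :
    simplexPoints a N \ {w | w 0 = 0} = ∅ := by
  refine Set.eq_empty_of_forall_notMem fun w ⟨hw, hw0⟩ => hN.not_ge ?_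
  calc a 0 ≤ a 0 * w 0 := Nat.le_mul_of_pos_right _ (Nat.pos_of_ne_zero hw0)
    _ ≤ ∑ i, a i * w i := single_le_sum (f := fun i => a i * w i) (by simp) (mem_univ 0)
    _ ≤ N := hw

theorem ncard_simplexPoints_add {a : Fin (k + 1) → ℕ} (ha : ∀ i, 0 < a i) (N : ℕ) :
    (simplexPoints a (N + a 0)).ncard =
      (simplexPoints (Fin.tail a) (N + a 0)).ncard + (simplexPoints a N).ncard := by
  rw [← Set.ncard_inter_add_ncard_sdiff_eq_ncard _ {w | w 0 = 0} (simplexPoints_finite ha _),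
    simplexPoints_inter_eq_image_cons, simplexPoints_add_diff_eq_image,
    Set.ncard_image_of_injective _ (Fin.cons_right_injective 0),
    Set.ncard_image_of_injective _ (add_left_injective _)]

theorem ncard_simplexPoints_of_lt {a : Fin (k + 1) → ℕ} (ha : ∀ i, 0 < a i) {N : ℕ}
    (hN : N < a 0) : (simplexPoints a N).ncard = (simplexPoints (Fin.tail a) N).ncard := by
  rw [← Set.ncard_inter_add_ncard_sdiff_eq_ncard _ {w | w 0 = 0} (simplexPoints_finite ha _),
    simplexPoints_inter_eq_image_cons, simplexPoints_diff_eq_empty hN, Set.ncard_empty, add_zero,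
    Set.ncard_image_of_injective _ (Fin.cons_right_injective 0)]

theorem ncard_simplexPoints_mul_le :
    ∀ {k : ℕ} (a : Fin k → ℕ), (∀ i, 0 < a i) → ∀ N : ℕ,
      ((simplexPoints a N).ncard : ℝ) * (k ! * ∏ i, (a i : ℝ)) ≤ (N + ∑ i, (a i : ℝ)) ^ k
  | 0, a, _, N => by simp [simplexPoints]
  | k + 1, a, ha, N => by
    induction N using Nat.strong_induction_on with | _ N ihN =>
    have htail := ncard_simplexPoints_mul_le (Fin.tail a) (fun i => ha i.succ) N
    set y : ℝ := N + ∑ i, (Fin.tail a i : ℝ)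
    have hy : 0 ≤ y := by positivity
    have hfac : ((k + 1)! * ∏ i, (a i : ℝ)) = (k + 1) * a 0 * (k ! * ∏ i, (Fin.tail a i : ℝ)) := by
      rw [Fin.prod_univ_succ, Nat.factorial_succ]; push_cast [Fin.tail]; ring
    have hsum : (N + ∑ i, (a i : ℝ)) = y + a 0 := by
      rw [Fin.sum_univ_succ]; simp only [y, Fin.tail]; ring
    have hbern : y ^ (k + 1) + (k + 1) * y ^ k * a 0 ≤ (y + a 0) ^ (k + 1) := by
      simpa using pow_add_mul_le_add_pow hy (by positivity : 0 ≤ 2 * y + a 0) (k + 1)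
    have hstep (c : ℝ) (hc : c * ((k + 1)! * ∏ i, (a i : ℝ)) ≤ y ^ (k + 1)) :
        ((simplexPoints (Fin.tail a) N).ncard + c) * ((k + 1)! * ∏ i, (a i : ℝ)) ≤
          (N + ∑ i, (a i : ℝ)) ^ (k + 1) := by
      rw [hfac] at hc
      rw [hsum, add_mul, hfac]
      have := mul_le_mul_of_nonneg_left htail (by positivity : (0 : ℝ) ≤ (k + 1) * a 0)
      linarith
    obtain hN | ⟨M, rfl⟩ : N < a 0 ∨ ∃ M, N = M + a 0 :=
      (lt_or_ge N (a 0)).imp_right fun h => ⟨N - a 0, by omega⟩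
    · simpa [ncard_simplexPoints_of_lt ha hN] using hstep 0 (by simp; positivity)
    · have hM := ihN M (by have := ha 0; omega)
      rw [ncard_simplexPoints_add ha, Nat.cast_add]
      refine hstep _ (hM.trans_eq ?_)
      simp only [y, Fin.sum_univ_succ, Fin.tail]; push_cast; ring

end SimplexPoints

section Representations

variable {k : ℕ}

theorem representations_eq_empty_of_neg {n : ℕ} (a : Fin n → ℕ) {b : ℤ} (hb : b < 0) :
    representations a b = ∅ :=
  Set.eq_empty_of_forall_notMem fun z (hz : _ = b) => by
    have : 0 ≤ ∑ i, (a i : ℤ) * z i := by positivity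
    omega

theorem representations_subset_simplexPoints {n : ℕ} (a : Fin n → ℕ) (b : ℤ) :
    representations a b ⊆ simplexPoints a b.toNat := fun z (hz : _ = b) => by
  simp only [simplexPoints, Set.mem_ofPred_eq]
  have : ((∑ i, a i * z i : ℕ) : ℤ) = b := by push_cast; exact hz
  omega

theorem sum_init_add_of_mem_representations {a z : Fin (k + 1) → ℕ} {N j : ℕ}
    (hz : z ∈ representations a (N - j)) :
    ∑ i, Fin.init a i * Fin.init z i + (j + a (Fin.last k) * z (Fin.last k)) = N := by
  have : ∑ i, (a i : ℤ) * z i = N - j := hz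
  rw [Fin.sum_univ_castSucc] at this
  simp only [Fin.init]
  zify
  linarith

theorem mul_le_ncard_simplexPoints_init {s : ℕ} (a : Fin (k + 1) → ℕ) (ha : ∀ i, 0 < a i) (N : ℕ)
    (hrep : ∀ j < a (Fin.last k), s ≤ (representations a (N - j)).ncard) :
    s * a (Fin.last k) ≤ (simplexPoints (Fin.init a) N).ncard := by
  have := (simplexPoints_finite (a := Fin.init a) (fun i => ha i.castSucc) N).to_subtype
  have (j : ℕ) := ((simplexPoints_finite ha _).subset
    (representations_subset_simplexPoints a (N - j))).to_subtype
  let f : (Σ j : Fin (a (Fin.last k)), representations a (N - j)) →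
      simplexPoints (Fin.init a) N := fun p =>
    ⟨Fin.init (p.2 : Fin (k + 1) → ℕ), by
      have := sum_init_add_of_mem_representations p.2.2
      simp only [simplexPoints, Set.mem_ofPred_eq]
      omega⟩
  have hf : f.Injective := by
    rintro ⟨j, z, hz⟩ ⟨j', z', hz'⟩ h
    have hinit : Fin.init z = Fin.init z' := congrArg Subtype.val h
    have h1 := sum_init_add_of_mem_representations hz
    have h2 := sum_init_add_of_mem_representations hz'
    rw [← hinit] at h2
    have hq : j + a (Fin.last k) * z (Fin.last k) = j' + a (Fin.last k) * z' (Fin.last k) := by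
      omega
    obtain ⟨hzl, hj⟩ := (Nat.div_mod_unique (ha (Fin.last k))).2 ⟨hq, j.2⟩
    obtain ⟨hzl', hj'⟩ :=
      (Nat.div_mod_unique (d := z' (Fin.last k)) (ha (Fin.last k))).2 ⟨rfl, j'.2⟩
    obtain rfl : j = j' := Fin.ext (hj.symm.trans hj')
    obtain rfl : z = z' := by
      rw [← Fin.snoc_init_self z, ← Fin.snoc_init_self z', hinit, ← hzl, hzl']
    rfl
  calc s * a (Fin.last k) = ∑ _j : Fin (a (Fin.last k)), s := by simp [mul_comm]
    _ ≤ ∑ j : Fin (a (Fin.last k)), (representations a (N - j)).ncard :=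
      sum_le_sum fun j _ => hrep j j.2
    _ = Nat.card (Σ j : Fin (a (Fin.last k)), representations a (N - j)) := by
      simp [Nat.card_sigma, Nat.card_coe_set_eq]
    _ ≤ (simplexPoints (Fin.init a) N).ncard :=
      (Nat.card_le_card_of_injective f hf).trans_eq (Nat.card_coe_set_eq _)

theorem mul_factorial_mul_prod_le {s : ℕ} (a : Fin (k + 1) → ℕ) (ha : ∀ i, 0 < a i) (N : ℕ)
    (hrep : ∀ j < a (Fin.last k), s ≤ (representations a (N - j)).ncard) :
    (s : ℝ) * (k ! * ∏ i, (a i : ℝ)) ≤ (N + ∑ i, (Fin.init a i : ℝ)) ^ k :=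
  calc (s : ℝ) * (k ! * ∏ i, (a i : ℝ))
      = (s * a (Fin.last k) : ℕ) * (k ! * ∏ i, (Fin.init a i : ℝ)) := by
        rw [Fin.prod_univ_castSucc]; push_cast [Fin.init]; ring
    _ ≤ (simplexPoints (Fin.init a) N).ncard * (k ! * ∏ i, (Fin.init a i : ℝ)) := by
        gcongr
        exact mul_le_ncard_simplexPoints_init a ha N hrep
    _ ≤ (N + ∑ i, (Fin.init a i : ℝ)) ^ k :=
        ncard_simplexPoints_mul_le (Fin.init a) (fun i => ha _) N

end Representations

theorem rpow_one_div_mul_rpow_one_div_le {x y t : ℝ} {k : ℕ} (hk : 0 < k) (hx : 0 ≤ x)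
    (hy : 0 ≤ y) (ht : 0 ≤ t) (h : x * y ≤ t ^ k) :
    x ^ (1 / (k : ℝ)) * y ^ (1 / (k : ℝ)) ≤ t := by
  rwa [← Real.mul_rpow hx hy, one_div, Real.rpow_inv_le_iff_of_pos (by positivity) ht
    (Nat.cast_pos.2 hk), Real.rpow_natCast]

theorem sFrobenius_lower_bound_general {n s : ℕ} (hn : 2 ≤ n)
    (a : Fin n → ℕ) (ha : ∀ i, 0 < a i)
    (F : ℤ)
    (hF : IsGreatest
      {b : ℤ | {z : Fin n → ℕ | ∑ i, (a i : ℤ) * (z i : ℤ) = b}.ncard < s} F) :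
    (s : ℝ) ^ ((1 : ℝ) / ((n : ℝ) - 1)) *
        (((n - 1).factorial : ℝ) * ∏ i, (a i : ℝ)) ^ ((1 : ℝ) / ((n : ℝ) - 1))
      - ∑ i, (a i : ℝ) ≤ (F : ℝ) := by
  obtain ⟨k, rfl⟩ : ∃ k, n = k + 1 := ⟨n - 1, by omega⟩
  have hF₀ : -1 ≤ F := hF.2 <| show (representations a (-1)).ncard < s by
    rw [representations_eq_empty_of_neg a (by norm_num), Set.ncard_empty]
    exact (Nat.zero_le _).trans_lt hF.1
  set N := (F + a (Fin.last k)).toNat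
  have hN : (N : ℤ) = F + a (Fin.last k) := Int.toNat_of_nonneg (by have := ha (Fin.last k); omega)
  have hsum : (N : ℝ) + ∑ i, (Fin.init a i : ℝ) = F + ∑ i, (a i : ℝ) := by
    rw [Fin.sum_univ_castSucc, (by exact_mod_cast hN : (N : ℝ) = F + a (Fin.last k))]
    simp only [Fin.init]; ring
  have hpow := mul_factorial_mul_prod_le a ha N fun j hj =>
    le_of_not_gt fun h => (hF.2 h).not_gt (by omega)
  rw [hsum] at hpow
  rw [Nat.cast_add_one, add_sub_cancel_right, Nat.add_sub_cancel, sub_le_iff_le_add]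
  exact rpow_one_div_mul_rpow_one_div_le (by omega) (by positivity) (by positivity)
    (hsum ▸ by positivity) hpow

/-- **Lower bound for the s-Frobenius number** (Aliev–Fukshansky–Henk, Theorem 1).
For `n ≥ 2`, `s ≥ 1` and a primitive vector `a` of positive integers, the `s`-Frobenius
number `F` (the largest integer with fewer than `s` representations as a non-negative
integral combination of the `a i`) satisfies
`F ≥ s^(1/(n-1)) * ((n-1)! * a 1 * ... * a n)^(1/(n-1)) - (a 1 + ... + a n)`. -/
theorem sFrobenius_lower_bound {n s : ℕ} (hn : 2 ≤ n) (hs : 1 ≤ s)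
    (a : Fin n → ℕ) (ha : ∀ i, 0 < a i) (hgcd : Finset.univ.gcd a = 1)
    (F : ℤ)
    (hF : IsGreatest
      {b : ℤ | {z : Fin n → ℕ | ∑ i, (a i : ℤ) * (z i : ℤ) = b}.ncard < s} F) :
    (s : ℝ) ^ ((1 : ℝ) / ((n : ℝ) - 1)) *
        (((n - 1).factorial : ℝ) * ∏ i, (a i : ℝ)) ^ ((1 : ℝ) / ((n : ℝ) - 1))
      - ∑ i, (a i : ℝ) ≤ (F : ℝ) :=
  sFrobenius_lower_bound_general hn a ha F hF
end

section
/- Let s ≥ 1 be an integer, let K ⊆ ℝ^n be a convex body (a compact convex set with non-empty interior) and let Λ ⊆ ℝ^n be a full-rank lattice. Then the s-covering radius satisfies the lower bound μ_s(K, Λ) ≥ s^{1/n} · (det Λ / vol K)^{1/n}, where vol K is the n-dimensional Lebesgue measure of K and det Λ is the covolume of Λ. -/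
/-!
Every point of `ℝⁿ` lies in at least `s` lattice translates of `μ K`, so integrating the number
of translates containing a point over a fundamental cell `F` of `Λ` gives
`s · vol F ≤ vol (μ K) = μⁿ · vol K`; as `vol F = |det B|`, taking `n`-th roots gives the bound.
In dimension `0` the set of `s`-covering radii is empty or all of `(0, ∞)`, so it has no least
element.
-/

open MeasureTheory Set Pointwise Submodule

namespace MeasureTheory.IsAddFundamentalDomain

variable {G α : Type*} [AddGroup G] [Countable G] [MeasurableSpace G] [MeasurableSpace α]
  [AddAction G α] [MeasurableVAdd G α] {μ : Measure α} [VAddInvariantMeasure G α μ] {F A : Set α}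

theorem nsmul_measure_le_of_forall_exists_injective (hF : IsAddFundamentalDomain G F μ)
    (hA : NullMeasurableSet A μ) {s : ℕ}
    (hcov : ∀ x, ∃ b : Fin s → G, Function.Injective b ∧ ∀ i, x ∈ b i +ᵥ A) :
    s • μ F ≤ μ A := by
  have hmult (x : α) : (s : ENNReal) ≤ ∑' g : G, (g +ᵥ A).indicator (fun _ => 1) x := by
    obtain ⟨b, hb, hx⟩ := hcov x
    calc (s : ENNReal) = ∑' i, (b i +ᵥ A).indicator (fun _ => 1) x := by
          simp [Set.indicator_of_mem (hx _)]
      _ ≤ _ := ENNReal.tsum_comp_le_tsum_of_injective hb fun g => (g +ᵥ A).indicator _ x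
  have hmeas (g : G) : NullMeasurableSet (g +ᵥ A) (μ.restrict F) :=
    (hA.vadd g).mono_ac Measure.restrict_le_self.absolutelyContinuous
  calc s • μ F = ∫⁻ _ in F, (s : ENNReal) ∂μ := by simp [nsmul_eq_mul]
    _ ≤ ∫⁻ x in F, ∑' g : G, (g +ᵥ A).indicator (fun _ => 1) x ∂μ := lintegral_mono hmult
    _ = ∑' g : G, μ ((g +ᵥ A) ∩ F) := by
        rw [lintegral_tsum fun g => aemeasurable_one.indicator₀ (hmeas g)]
        exact tsum_congr fun g =>
          (lintegral_indicator_one₀ (hmeas g)).trans (Measure.restrict_apply₀ (hmeas g))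
    _ = μ A := (hF.measure_eq_tsum A).symm

end MeasureTheory.IsAddFundamentalDomain

namespace Matrix

variable {ι : Type*} [Fintype ι]

theorem setOf_eq_mulVec_intCast_eq_span_col (B : Matrix ι ι ℝ) :
    {x | ∃ z : ι → ℤ, x = B *ᵥ fun i => (z i : ℝ)} = span ℤ (range B.col) := by
  ext x
  simp only [mem_ofPred_eq, SetLike.mem_coe, mem_span_range_iff_exists_fun, eq_comm (a := x)]
  refine exists_congr fun z => ?_
  have hcols : (B *ᵥ fun i => (z i : ℝ)) = ∑ i, z i • B.col i := by
    ext j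
    simp [mulVec, dotProduct, mul_comm]
  rw [hcols]

variable [DecidableEq ι]

noncomputable def colBasis (B : Matrix ι ι ℝ) (hB : IsUnit B.det) : Module.Basis ι ℝ (ι → ℝ) :=
  basisOfLinearIndependentOfCardEqFinrank' B.col
    (B.linearIndependent_cols_of_isUnit (B.isUnit_iff_isUnit_det.2 hB)) (by simp)

@[simp]
theorem coe_colBasis (B : Matrix ι ι ℝ) (hB : IsUnit B.det) : ⇑(B.colBasis hB) = B.col :=
  coe_basisOfLinearIndependentOfCardEqFinrank' ..

theorem volume_fundamentalDomain_colBasis (B : Matrix ι ι ℝ) (hB : IsUnit B.det) :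
    volume (ZSpan.fundamentalDomain (B.colBasis hB)) = ENNReal.ofReal |B.det| := by
  rw [ZSpan.volume_fundamentalDomain, coe_colBasis, ← det_transpose]
  rfl

end Matrix

theorem Real.volume_pi_smul {ι : Type*} [Fintype ι] {r : ℝ} (hr : 0 ≤ r) (K : Set (ι → ℝ)) :
    volume (r • K) = ENNReal.ofReal (r ^ Fintype.card ι) * volume K := by
  rw [Measure.addHaar_smul, Module.finrank_fintype_fun_eq_card, abs_of_nonneg (by positivity)]

section SCovering

variable {E : Type*} [AddCommGroup E] [Module ℝ E]

/-- The `s`-covering radius `μ_s(K, Λ)` is the least element of this set. -/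
def sCoveringRadii (s : ℕ) (K Λ : Set E) : Set ℝ :=
  {r | 0 < r ∧ ∀ t : E, ∃ b : Fin s → E, Function.Injective b ∧
    ∀ i, b i ∈ Λ ∧ ∃ x ∈ K, t = b i + r • x}

theorem not_isLeast_sCoveringRadii [Subsingleton E] {s : ℕ} {K Λ : Set E} {μ : ℝ} :
    ¬ IsLeast (sCoveringRadii s K Λ) μ := by
  rintro ⟨⟨hμ, hcov⟩, hleast⟩
  have hhalf : μ / 2 ∈ sCoveringRadii s K Λ := by
    refine ⟨half_pos hμ, fun t => ?_⟩
    obtain ⟨b, hb, hbt⟩ := hcov t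
    refine ⟨b, hb, fun i => ⟨(hbt i).1, ?_⟩⟩
    obtain ⟨x, hx, -⟩ := (hbt i).2
    exact ⟨x, hx, Subsingleton.elim _ _⟩
  linarith [hleast hhalf]

theorem exists_injective_vadd_smul_of_mem_sCoveringRadii {s : ℕ} {K : Set E}
    {L : AddSubgroup E} {r : ℝ} (hr : r ∈ sCoveringRadii s K L) (t : E) :
    ∃ b : Fin s → L, Function.Injective b ∧ ∀ i, t ∈ b i +ᵥ r • K := by
  obtain ⟨b, hb, hbt⟩ := hr.2 t
  refine ⟨fun i => ⟨b i, (hbt i).1⟩, fun i j h => hb (congrArg Subtype.val h), fun i => ?_⟩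
  obtain ⟨x, hx, rfl⟩ := (hbt i).2
  exact vadd_mem_vadd_set (smul_mem_smul_set hx)

end SCovering

theorem Real.rpow_one_div_mul_le_of_mul_le_pow_mul {n : ℕ} (hn : n ≠ 0) {a d v r : ℝ}
    (ha : 0 ≤ a) (hd : 0 ≤ d) (hv : 0 ≤ v) (hr : 0 ≤ r) (h : a * d ≤ r ^ n * v) :
    a ^ (1 / n : ℝ) * (d / v) ^ (1 / n : ℝ) ≤ r := by
  rw [← Real.mul_rpow ha (div_nonneg hd hv), one_div,
    Real.rpow_inv_le_iff_of_pos (by positivity) hr (by positivity), Real.rpow_natCast,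
    ← mul_div_assoc]
  exact div_le_of_le_mul₀ hv (by positivity) h

theorem sCoveringRadius_lower_bound_general {n s : ℕ}
    (K : Set (Fin n → ℝ)) (hKcpt : IsCompact K)
    (B : Matrix (Fin n) (Fin n) ℝ) (hB : IsUnit B.det)
    (Λ : Set (Fin n → ℝ))
    (hΛ : Λ = {x | ∃ z : Fin n → ℤ, x = B.mulVec fun i => (z i : ℝ)})
    (μ : ℝ)
    (hμ : IsLeast {r : ℝ | 0 < r ∧ ∀ t : Fin n → ℝ,
        ∃ b : Fin s → (Fin n → ℝ), Function.Injective b ∧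
          ∀ i, b i ∈ Λ ∧ ∃ x ∈ K, t = b i + r • x} μ) :
    (s : ℝ) ^ ((1 : ℝ) / (n : ℝ)) *
        (|B.det| / (MeasureTheory.volume K).toReal) ^ ((1 : ℝ) / (n : ℝ)) ≤ μ := by
  obtain rfl | hn := eq_or_ne n 0
  · exact absurd hμ not_isLeast_sCoveringRadii
  set b := B.colBasis hB
  set L := (span ℤ (range b)).toAddSubgroup
  have hΛL : Λ = L := by rw [hΛ, B.setOf_eq_mulVec_intCast_eq_span_col, ← B.coe_colBasis hB]; rfl
  have hμL : μ ∈ sCoveringRadii s K L := hΛL ▸ hμ.1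
  have : Countable L := inferInstanceAs (Countable (span ℤ (range b)))
  have hμpos : 0 < μ := hμL.1
  have hvol : (s : ENNReal) * ENNReal.ofReal |B.det| ≤ ENNReal.ofReal (μ ^ n) * volume K :=
    calc (s : ENNReal) * ENNReal.ofReal |B.det| = s • volume (ZSpan.fundamentalDomain b) := by
          rw [B.volume_fundamentalDomain_colBasis, nsmul_eq_mul]
      _ ≤ volume (μ • K) :=
          (ZSpan.isAddFundamentalDomain' b volume).nsmul_measure_le_of_forall_exists_injective
            (hKcpt.smul μ).measurableSet.nullMeasurableSet
            (exists_injective_vadd_smul_of_mem_sCoveringRadii hμL)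
      _ = ENNReal.ofReal (μ ^ n) * volume K := by
          rw [Real.volume_pi_smul hμpos.le, Fintype.card_fin]
  have hreal : (s : ℝ) * |B.det| ≤ μ ^ n * (volume K).toReal := by
    simpa [ENNReal.toReal_mul, abs_nonneg, hμpos.le] using
      ENNReal.toReal_mono (ENNReal.mul_ne_top ENNReal.ofReal_ne_top hKcpt.measure_lt_top.ne) hvol
  exact Real.rpow_one_div_mul_le_of_mul_le_pow_mul hn s.cast_nonneg (abs_nonneg _)
    ENNReal.toReal_nonneg hμpos.le hreal

/-- **Lower bound for the s-covering radius** (Lemma 1 in Aliev–Fukshansky–Henk).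
Let `K ⊆ ℝⁿ` be a convex body, `Λ = B·ℤⁿ` a full-rank lattice and let `μ` be the
`s`-covering radius of `K` with respect to `Λ`, i.e. the smallest `μ > 0` such that every
`t ∈ ℝⁿ` lies in at least `s` distinct lattice translates of `μ K`. Then
`μ ≥ s^(1/n) * (det Λ / vol K)^(1/n)`. -/
theorem sCoveringRadius_lower_bound {n s : ℕ} (hs : 1 ≤ s)
    (K : Set (Fin n → ℝ)) (hKcpt : IsCompact K) (hKconv : Convex ℝ K)
    (hKint : (interior K).Nonempty)
    (B : Matrix (Fin n) (Fin n) ℝ) (hB : IsUnit B.det)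
    (Λ : Set (Fin n → ℝ))
    (hΛ : Λ = {x | ∃ z : Fin n → ℤ, x = B.mulVec fun i => (z i : ℝ)})
    (μ : ℝ)
    (hμ : IsLeast {r : ℝ | 0 < r ∧ ∀ t : Fin n → ℝ,
        ∃ b : Fin s → (Fin n → ℝ), Function.Injective b ∧
          ∀ i, b i ∈ Λ ∧ ∃ x ∈ K, t = b i + r • x} μ) :
    (s : ℝ) ^ ((1 : ℝ) / (n : ℝ)) *
        (|B.det| / (MeasureTheory.volume K).toReal) ^ ((1 : ℝ) / (n : ℝ)) ≤ μ :=
  sCoveringRadius_lower_bound_general K hKcpt B hB Λ hΛ μ hμ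
end

section
/- Let s ≥ 1 be an integer, let K ⊆ ℝ^n be a convex body (a compact convex set with non-empty interior) and let Λ ⊆ ℝ^n be a full-rank lattice. Then μ_s(K, Λ) ≤ (1 + ((n!)^{1/n}/n)·(s−1)^{1/n}) · (λ_1(K,Λ) + λ_2(K,Λ) + … + λ_n(K,Λ)), where λ_i(K,Λ) are the successive minima of K with respect to Λ. -/
/-!
The successive minima provide linearly independent lattice vectors `vᵢ = λᵢ (xᵢ - yᵢ)` with
`xᵢ, yᵢ ∈ K`. After a linear change of variables, `K` contains a unit segment in each coordinate
direction. If a convex body in `ℝᵐ⁺¹` contains a unit segment in the first coordinate direction,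
then by convexity its slices over the projection `π` shrink at most linearly towards the boundary,
so `vol π(K) ≤ (m + 1) vol K`. Induction gives `|det (xᵢ - yᵢ)| ≤ n! vol K`, and with AM-GM the
parallelepiped `P` spanned by the `vᵢ` has volume at most `n! (ρ/n)ⁿ vol K`, where `ρ = ∑ λᵢ`;
the constant `ε` is exactly the one with `(s - 1) n! (ρ/n)ⁿ = (ερ)ⁿ`. Some translate of `P` lies
in `ρK`. For `δ > ερ` the body `δK` thus has volume greater than `(s - 1) vol P`, so every
`t - δK` meets at least `s` cells `b + P` of the lattice spanned by the `vᵢ`, and each such `b`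
satisfies `t ∈ b + (ρ + δ) K`.
-/

open MeasureTheory Set Pointwise Module

theorem lintegral_Ioo_ofReal_one_sub_pow (m : ℕ) :
    ∫⁻ a in Ioo (0 : ℝ) 1, ENNReal.ofReal ((1 - a) ^ m) = ENNReal.ofReal (1 / (m + 1)) := by
  rw [← ofReal_integral_eq_lintegral_ofReal, ← integral_Ioc_eq_integral_Ioo,
    ← intervalIntegral.integral_of_le zero_le_one,
    intervalIntegral.integral_comp_sub_left (fun a => a ^ m), integral_pow]
  · norm_num
  · exact ((continuous_const.sub continuous_id).pow m).integrableOn_Icc.mono_set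
      Ioo_subset_Icc_self
  · filter_upwards [ae_restrict_mem measurableSet_Ioo] with a ha
    exact pow_nonneg (by linarith [ha.2]) m

section Slice

variable {m : ℕ}

def slice (Q : Set (Fin (m + 1) → ℝ)) (u : Fin m → ℝ) : Set ℝ := {t | Fin.cons t u ∈ Q}

theorem slice_eq_preimage (Q : Set (Fin (m + 1) → ℝ)) (u : Fin m → ℝ) :
    slice Q u = (·, u) ⁻¹' ((MeasurableEquiv.piFinSuccAbove (fun _ => ℝ) 0).symm ⁻¹' Q) := by
  ext
  simp [slice]
  rfl

theorem volume_eq_lintegral_volume_slice {Q : Set (Fin (m + 1) → ℝ)} (hQ : MeasurableSet Q) :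
    volume Q = ∫⁻ u, volume (slice Q u) := by
  have e := (volume_preserving_piFinSuccAbove (fun _ : Fin (m + 1) => ℝ) 0).symm
  simp_rw [← e.measure_preimage_equiv, Measure.volume_eq_prod,
    Measure.prod_apply_symm (e.measurable hQ), slice_eq_preimage]

theorem measurable_volume_slice {Q : Set (Fin (m + 1) → ℝ)} (hQ : MeasurableSet Q) :
    Measurable fun u => volume (slice Q u) := by
  simp_rw [slice_eq_preimage]
  exact measurable_measure_prodMk_right
    ((MeasurableEquiv.piFinSuccAbove (fun _ : Fin (m + 1) => ℝ) 0).symm.measurable hQ)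

theorem Convex.ofReal_mul_volume_slice_le {Q : Set (Fin (m + 1) → ℝ)} (hQ : Convex ℝ Q)
    {a b : ℝ} (ha : 0 ≤ a) (hb : 0 ≤ b) (hab : a + b = 1) (u : Fin m → ℝ)
    {u' : Fin m → ℝ} (hu' : (slice Q u').Nonempty) :
    ENNReal.ofReal a * volume (slice Q u) ≤ volume (slice Q (a • u + b • u')) := by
  obtain ⟨t', ht'⟩ := hu'
  calc ENNReal.ofReal a * volume (slice Q u) = volume ((b * t') +ᵥ a • slice Q u) := by
        rw [measure_vadd, Measure.addHaar_smul, finrank_self, pow_one, abs_of_nonneg ha]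
    _ ≤ volume (slice Q (a • u + b • u')) := by
        refine measure_mono ?_
        rintro _ ⟨_, ⟨t, ht, rfl⟩, rfl⟩
        have := hQ ht ht' ha hb hab
        simp only [slice, mem_ofPred_eq, vadd_eq_add, smul_eq_mul] at this ⊢
        convert this using 1
        ext i
        refine Fin.cases ?_ (fun j => ?_) i <;> simp
        ring

theorem Convex.one_le_volume_slice_tail {Q : Set (Fin (m + 1) → ℝ)} (hQ : Convex ℝ Q)
    {p : Fin (m + 1) → ℝ} (hp : p ∈ Q) (hp' : p + Pi.single 0 1 ∈ Q) :
    1 ≤ volume (slice Q (Fin.tail p)) := by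
  calc (1 : ENNReal) = volume (Icc (p 0) (p 0 + 1)) := by simp
    _ ≤ _ := by
      refine measure_mono fun t ht => ?_
      have := hQ.add_smul_mem hp hp' (t := t - p 0) ⟨by linarith [ht.1], by linarith [ht.2]⟩
      show Fin.cons t (Fin.tail p) ∈ Q
      convert this using 1
      ext i
      refine Fin.cases ?_ (fun j => ?_) i <;> simp [Fin.tail]

theorem Convex.vadd_smul_image_tail_subset {Q : Set (Fin (m + 1) → ℝ)} (hQ : Convex ℝ Q)
    {p : Fin (m + 1) → ℝ} (hp : p ∈ Q) (hp' : p + Pi.single 0 1 ∈ Q) {a : ℝ} (ha₀ : 0 ≤ a)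
    (ha₁ : a ≤ 1) :
    a • Fin.tail p +ᵥ (1 - a) • (Fin.tail '' Q) ⊆
      {u | ENNReal.ofReal a ≤ volume (slice Q u)} := by
  rintro _ ⟨_, ⟨_, ⟨q, hq, rfl⟩, rfl⟩, rfl⟩
  have hq' : (slice Q (Fin.tail q)).Nonempty := ⟨q 0, by simpa [slice, Fin.cons_self_tail]⟩
  calc ENNReal.ofReal a = ENNReal.ofReal a * 1 := (mul_one _).symm
    _ ≤ ENNReal.ofReal a * volume (slice Q (Fin.tail p)) := by
      gcongr
      exact hQ.one_le_volume_slice_tail hp hp'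
    _ ≤ _ := hQ.ofReal_mul_volume_slice_le ha₀ (by linarith) (by ring) _ hq'

end Slice

theorem IsCompact.volume_image_tail_le {m : ℕ} {Q : Set (Fin (m + 1) → ℝ)} (hQc : IsCompact Q)
    (hQ : Convex ℝ Q) {p : Fin (m + 1) → ℝ} (hp : p ∈ Q) (hp' : p + Pi.single 0 1 ∈ Q) :
    volume (Fin.tail '' Q) ≤ (m + 1) * volume Q := by
  have hQm : MeasurableSet Q := hQc.measurableSet
  -- the layer cake formula needs a real-valued function, so the slice volumes are capped at 1
  set f : (Fin m → ℝ) → ℝ := fun u => (min (volume (slice Q u)) 1).toReal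
  have hf : Measurable f :=
    ((measurable_volume_slice hQm).min measurable_const).ennreal_toReal
  have hlayer : ∀ a ∈ Ioo (0 : ℝ) 1,
      ENNReal.ofReal ((1 - a) ^ m) * volume (Fin.tail '' Q) ≤ volume {u | a ≤ f u} := by
    intro a ha
    calc ENNReal.ofReal ((1 - a) ^ m) * volume (Fin.tail '' Q)
        = volume (a • Fin.tail p +ᵥ (1 - a) • (Fin.tail '' Q)) := by
          rw [measure_vadd, Measure.addHaar_smul, finrank_fin_fun,
            abs_of_nonneg (pow_nonneg (by linarith [ha.2]) m)]
      _ ≤ volume {u | ENNReal.ofReal a ≤ volume (slice Q u)} :=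
          measure_mono (hQ.vadd_smul_image_tail_subset hp hp' ha.1.le ha.2.le)
      _ ≤ volume {u | a ≤ f u} := by
          refine measure_mono fun u hu => ?_
          have : ENNReal.ofReal a ≤ min (volume (slice Q u)) 1 := le_min hu (by simp [ha.2.le])
          simpa [ha.1.le] using ENNReal.toReal_mono (by simp) this
  have hm : ((m : ENNReal) + 1) * ENNReal.ofReal (1 / (m + 1)) = 1 := by
    rw [← ENNReal.ofReal_natCast, ← ENNReal.ofReal_one,
      ← ENNReal.ofReal_add (by positivity) zero_le_one, ← ENNReal.ofReal_mul (by positivity)]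
    congr 1
    field_simp
  calc volume (Fin.tail '' Q)
      = (m + 1) * (ENNReal.ofReal (1 / (m + 1)) * volume (Fin.tail '' Q)) := by
        rw [← mul_assoc, hm, one_mul]
    _ = (m + 1) *
          ∫⁻ a in Ioo (0 : ℝ) 1, ENNReal.ofReal ((1 - a) ^ m) * volume (Fin.tail '' Q) := by
        rw [lintegral_mul_const _ (by fun_prop), lintegral_Ioo_ofReal_one_sub_pow]
    _ ≤ (m + 1) * ∫⁻ a in Ioi (0 : ℝ), volume {u | a ≤ f u} := by
        gcongr _ * ?_
        exact (setLIntegral_mono' measurableSet_Ioo hlayer).trans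
          (lintegral_mono_set Ioo_subset_Ioi_self)
    _ = (m + 1) * ∫⁻ u, ENNReal.ofReal (f u) := by
        rw [lintegral_eq_lintegral_meas_le _ (.of_forall fun _ => ENNReal.toReal_nonneg)
          hf.aemeasurable]
    _ ≤ (m + 1) * volume Q := by
        rw [volume_eq_lintegral_volume_slice hQm]
        gcongr with u
        exact ENNReal.ofReal_toReal_le.trans (min_le_left _ _)

theorem IsCompact.one_le_factorial_mul_volume {m : ℕ} {Q : Set (Fin m → ℝ)}
    (hQc : IsCompact Q) (hQ : Convex ℝ Q) (hne : Q.Nonempty) {x y : Fin m → Fin m → ℝ}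
    (hx : ∀ i, x i ∈ Q) (hy : ∀ i, y i ∈ Q) (hxy : ∀ i, x i - y i = Pi.single i 1) :
    1 ≤ m.factorial * volume Q := by
  induction m with
  | zero => simp [hne.eq_univ, volume_pi]
  | succ m ih =>
    have hbase := ih (hQc.image (continuous_pi fun j => continuous_apply j.succ))
      (hQ.linear_image (LinearMap.funLeft ℝ ℝ Fin.succ)) (hne.image _)
      (x := fun j => Fin.tail (x j.succ)) (y := fun j => Fin.tail (y j.succ))
      (fun j => mem_image_of_mem _ (hx _)) (fun j => mem_image_of_mem _ (hy _)) fun j => by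
        ext k
        simpa [Fin.tail, Pi.single_apply] using congrFun (hxy j.succ) k.succ
    have hx₀ : y 0 + Pi.single 0 1 = x 0 := by rw [← hxy 0, add_sub_cancel]
    calc (1 : ENNReal) ≤ m.factorial * volume (Fin.tail '' Q) := hbase
      _ ≤ m.factorial * ((m + 1) * volume Q) := by
        gcongr
        exact hQc.volume_image_tail_le hQ (hy 0) (hx₀ ▸ hx 0)
      _ = (m + 1).factorial * volume Q := by
        rw [Nat.factorial_succ]
        push_cast
        ring

theorem IsCompact.ofReal_abs_det_le_factorial_mul_volume {n : ℕ} {Q : Set (Fin n → ℝ)}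
    (hQc : IsCompact Q) (hQ : Convex ℝ Q) (hne : Q.Nonempty) {x y : Fin n → Fin n → ℝ}
    (hx : ∀ i, x i ∈ Q) (hy : ∀ i, y i ∈ Q) :
    ENNReal.ofReal |(Matrix.of fun i => x i - y i).det| ≤ n.factorial * volume Q := by
  set W := Matrix.of fun i => x i - y i
  rcases eq_or_ne W.det 0 with hW | hW
  · simp [hW]
  set g := Matrix.toLin' W.transpose⁻¹
  have hg : ∀ i, g (x i) - g (y i) = Pi.single i 1 := fun i => by
    rw [← map_sub, Matrix.toLin'_apply, show x i - y i = W.transpose.mulVec (Pi.single i 1) by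
      simp [W], Matrix.mulVec_mulVec,
      Matrix.nonsing_inv_mul _ (by simpa using hW.isUnit), Matrix.one_mulVec]
  have h := (hQc.image g.continuous_of_finiteDimensional).one_le_factorial_mul_volume
    (hQ.linear_image g) (hne.image g) (fun i => mem_image_of_mem g (hx i))
    (fun i => mem_image_of_mem g (hy i)) hg
  rw [Measure.addHaar_image_linearMap, LinearMap.det_toLin', Matrix.det_nonsing_inv,
    Matrix.det_transpose, Ring.inverse_eq_inv, abs_inv] at h
  have hW' : ENNReal.ofReal |W.det| * ENNReal.ofReal |W.det|⁻¹ = 1 := by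
    rw [← ENNReal.ofReal_mul (abs_nonneg _), mul_inv_cancel₀ (abs_ne_zero.mpr hW),
      ENNReal.ofReal_one]
  calc ENNReal.ofReal |W.det| ≤ ENNReal.ofReal |W.det|
        * (n.factorial * (ENNReal.ofReal |W.det|⁻¹ * volume Q)) := le_mul_of_one_le_right' h
    _ = n.factorial * volume Q := by
        rw [mul_left_comm, ← mul_assoc (ENNReal.ofReal _), hW', one_mul]

theorem Finset.prod_le_pow_sum_div_card {ι : Type*} [Fintype ι] {z : ι → ℝ}
    (hz : ∀ i, 0 ≤ z i) :
    ∏ i, z i ≤ ((∑ i, z i) / Fintype.card ι) ^ Fintype.card ι := by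
  rcases isEmpty_or_nonempty ι with hι | hι
  · simp
  have hcard : (Fintype.card ι : ℝ) ≠ 0 := by positivity
  have hgm := Real.geom_mean_le_arith_mean_weighted univ (fun _ => (Fintype.card ι : ℝ)⁻¹) z
    (fun _ _ => by positivity) (by simp [hcard]) fun i _ => hz i
  calc ∏ i, z i = (∏ i, z i ^ (Fintype.card ι : ℝ)⁻¹) ^ Fintype.card ι := by
        rw [← Finset.prod_pow]
        exact Finset.prod_congr rfl fun i _ =>
          (Real.rpow_inv_natCast_pow (hz i) Fintype.card_ne_zero).symm
    _ ≤ ((∑ i, z i) / Fintype.card ι) ^ Fintype.card ι := by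
        gcongr
        · exact Finset.prod_nonneg fun i _ => Real.rpow_nonneg (hz i) _
        · simpa [← Finset.mul_sum, div_eq_inv_mul] using hgm

theorem mul_mul_div_pow_eq_rpow {n : ℕ} (hn : n ≠ 0) {a c : ℝ} (ha : 0 ≤ a) (hc : 0 ≤ c)
    (ρ : ℝ) :
    c * (a * (ρ / n) ^ n) = (a ^ ((1 : ℝ) / n) / n * c ^ ((1 : ℝ) / n) * ρ) ^ n := by
  rw [mul_pow, mul_pow, div_pow, div_pow, one_div, Real.rpow_inv_natCast_pow ha hn,
    Real.rpow_inv_natCast_pow hc hn]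
  ring

theorem IsCompact.volume_fundamentalDomain_le {n : ℕ} {K : Set (Fin n → ℝ)}
    (hKc : IsCompact K) (hK : Convex ℝ K) (hne : K.Nonempty) (b : Basis (Fin n) ℝ (Fin n → ℝ))
    {lam : Fin n → ℝ} (hlam : ∀ i, 0 ≤ lam i) {x y : Fin n → Fin n → ℝ} (hx : ∀ i, x i ∈ K)
    (hy : ∀ i, y i ∈ K) (hb : ∀ i, b i = lam i • (x i - y i)) :
    volume (ZSpan.fundamentalDomain b) ≤
      ENNReal.ofReal (n.factorial * ((∑ i, lam i) / n) ^ n) * volume K := by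
  have hdet : (Matrix.of b).det = (∏ i, lam i) * (Matrix.of fun i => x i - y i).det := by
    rw [← Matrix.det_mul_column]
    congr 1
    ext i j
    simp [hb]
  have hprod₀ : 0 ≤ ∏ i, lam i := Finset.prod_nonneg fun i _ => hlam i
  have hprod := Finset.prod_le_pow_sum_div_card hlam
  rw [Fintype.card_fin] at hprod
  rw [ZSpan.volume_fundamentalDomain, hdet, abs_mul, abs_of_nonneg hprod₀,
    ENNReal.ofReal_mul hprod₀, mul_comm (n.factorial : ℝ),
    ENNReal.ofReal_mul (hprod₀.trans hprod), ENNReal.ofReal_natCast, mul_assoc]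
  gcongr
  exact hKc.ofReal_abs_det_le_factorial_mul_volume hK hne hx hy

theorem IsCompact.natCast_mul_volume_fundamentalDomain_lt {n k : ℕ} (hn : n ≠ 0)
    {K : Set (Fin n → ℝ)} (hKc : IsCompact K) (hK : Convex ℝ K) (hKint : (interior K).Nonempty)
    (b : Basis (Fin n) ℝ (Fin n → ℝ)) {lam : Fin n → ℝ} (hlam : ∀ i, 0 ≤ lam i)
    {x y : Fin n → Fin n → ℝ} (hx : ∀ i, x i ∈ K) (hy : ∀ i, y i ∈ K)
    (hb : ∀ i, b i = lam i • (x i - y i)) {δ : ℝ}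
    (hδ : (n.factorial : ℝ) ^ ((1 : ℝ) / n) / n * (k : ℝ) ^ ((1 : ℝ) / n) * ∑ i, lam i < δ) :
    k * volume (ZSpan.fundamentalDomain b) < volume (δ • K) := by
  have hK₀ : volume K ≠ 0 := (Measure.measure_pos_of_nonempty_interior _ hKint).ne'
  have hsum : 0 ≤ ∑ i, lam i := Finset.sum_nonneg fun i _ => hlam i
  have hε : 0 ≤ (n.factorial : ℝ) ^ ((1 : ℝ) / n) / n * (k : ℝ) ^ ((1 : ℝ) / n) * ∑ i, lam i :=
    by positivity
  calc k * volume (ZSpan.fundamentalDomain b)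
      ≤ k * (ENNReal.ofReal (n.factorial * ((∑ i, lam i) / n) ^ n) * volume K) := by
        gcongr
        exact hKc.volume_fundamentalDomain_le hK (hKint.mono interior_subset) b hlam hx hy hb
    _ = ENNReal.ofReal
          (((n.factorial : ℝ) ^ ((1 : ℝ) / n) / n * (k : ℝ) ^ ((1 : ℝ) / n) * ∑ i, lam i) ^ n)
          * volume K := by
        rw [← mul_assoc, ← ENNReal.ofReal_natCast, ← ENNReal.ofReal_mul k.cast_nonneg,
          mul_mul_div_pow_eq_rpow hn (Nat.cast_nonneg _) k.cast_nonneg]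
    _ < ENNReal.ofReal (δ ^ n) * volume K := by
        gcongr ?_ * _
        · exact hKc.measure_lt_top.ne
        · exact (ENNReal.ofReal_lt_ofReal_iff (pow_pos (hε.trans_lt hδ) n)).mpr
            (pow_lt_pow_left₀ hδ hε hn)
    _ = volume (δ • K) := by
        rw [Measure.addHaar_smul, finrank_fin_fun, abs_pow, abs_of_nonneg (hε.trans hδ.le)]

theorem exists_linearIndependent_forall_mem {k V : Type*} [DivisionRing k] [AddCommGroup V]
    [Module k V] {n : ℕ} (S : Fin n → Set V)
    (hS : ∀ i : Fin n, (i : ℕ) + 1 ≤ finrank k (Submodule.span k (S i))) :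
    ∃ v : Fin n → V, LinearIndependent k v ∧ ∀ i, v i ∈ S i := by
  induction n with
  | zero => exact ⟨Fin.elim0, linearIndependent_empty_type, fun i => i.elim0⟩
  | succ n ih =>
    obtain ⟨v, hv, hvS⟩ := ih (fun i => S i.castSucc) fun i => by simpa using hS i.castSucc
    obtain ⟨u, huS, hu⟩ : ∃ u ∈ S (Fin.last n), u ∉ Submodule.span k (range v) := by
      by_contra! h
      have := Module.Finite.span_of_finite k (finite_range v)
      have hle := (Submodule.finrank_mono (Submodule.span_le.mpr h)).trans
        (finrank_range_le_card v)
      have hlt := hS (Fin.last n)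
      rw [Fintype.card_fin] at hle
      rw [Fin.val_last] at hlt
      omega
    refine ⟨Fin.snoc v u, linearIndependent_finSnoc.mpr ⟨hv, hu⟩, fun i => ?_⟩
    induction i using Fin.lastCases with
    | last => simpa using huS
    | cast i => simpa using hvS i

theorem exists_basis_of_le_finrank_span {n : ℕ} {K Λ : Set (Fin n → ℝ)} {lam : Fin n → ℝ}
    (hlam : ∀ i : Fin n, (i : ℕ) + 1 ≤ finrank ℝ (Submodule.span ℝ ((lam i • (K - K)) ∩ Λ))) :
    ∃ (b : Basis (Fin n) ℝ (Fin n → ℝ)) (x y : Fin n → Fin n → ℝ), (∀ i, x i ∈ K) ∧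
      (∀ i, y i ∈ K) ∧ (∀ i, b i = lam i • (x i - y i)) ∧ range b ⊆ Λ := by
  obtain ⟨v, hv, hvS⟩ := exists_linearIndependent_forall_mem _ hlam
  have hsub : ∀ i, ∃ x ∈ K, ∃ y ∈ K, v i = lam i • (x - y) := fun i => by
    obtain ⟨_, ⟨x, hx, y, hy, rfl⟩, h⟩ := (hvS i).1
    exact ⟨x, hx, y, hy, h.symm⟩
  choose x hx y hy hxy using hsub
  let b := Basis.mk hv (hv.span_eq_top_of_card_eq_finrank' (by simp)).ge
  refine ⟨b, x, y, hx, hy, fun i => by simp [b, hxy], ?_⟩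
  rintro _ ⟨i, rfl⟩
  simpa [b] using (hvS i).2

theorem Set.exists_injective_forall_mem_of_le_encard {α : Type*} [Nonempty α] {A : Set α}
    {k : ℕ} (h : (k : ℕ∞) ≤ A.encard) : ∃ f : Fin k → α, Function.Injective f ∧ ∀ i, f i ∈ A := by
  obtain ⟨f, hf, hinj⟩ := (finite_univ (α := Fin k)).exists_injOn_of_encard_le (t := A)
    (by simpa using h)
  exact ⟨f, injOn_univ.mp hinj, fun i => hf (mem_univ i)⟩

section Lattice

variable {E : Type*} [NormedAddCommGroup E] [NormedSpace ℝ E]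

theorem Convex.sum_smul_mem_smul {ι : Type*} {K : Set E} (hK : Convex ℝ K) {s : Finset ι}
    {w : ι → ℝ} {p : ι → E} (hw : ∀ i ∈ s, 0 ≤ w i) (hw' : 0 < ∑ i ∈ s, w i)
    (hp : ∀ i ∈ s, p i ∈ K) :
    ∑ i ∈ s, w i • p i ∈ (∑ i ∈ s, w i) • K :=
  ⟨s.centerMass w p, hK.centerMass_mem hw hw' hp, by
    simp [Finset.centerMass, smul_smul, mul_inv_cancel₀ hw'.ne']⟩

open ZSpan Submodule

theorem Convex.vadd_fundamentalDomain_subset {ι : Type*} [Fintype ι] {K : Set E}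
    (hK : Convex ℝ K) (b : Basis ι ℝ E) {lam : ι → ℝ} (hlam : ∀ i, 0 ≤ lam i)
    (hsum : 0 < ∑ i, lam i) {x y : ι → E}
    (hx : ∀ i, x i ∈ K) (hy : ∀ i, y i ∈ K) (hb : ∀ i, b i = lam i • (x i - y i)) :
    (∑ i, lam i • y i) +ᵥ fundamentalDomain b ⊆ (∑ i, lam i) • K := by
  rintro _ ⟨m, hm, rfl⟩
  have hθ := fun i => (mem_fundamentalDomain b).mp hm i
  have : (∑ i, lam i • y i) +ᵥ m =
      ∑ i, lam i • ((1 - b.repr m i) • y i + b.repr m i • x i) := by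
    conv_lhs => rw [vadd_eq_add, ← b.sum_repr m, ← Finset.sum_add_distrib]
    refine Finset.sum_congr rfl fun i _ => ?_
    rw [hb]
    module
  change _ +ᵥ m ∈ _
  rw [this]
  exact hK.sum_smul_mem_smul (fun i _ => hlam i) hsum fun i _ =>
    hK (hy i) (hx i) (by linarith [(hθ i).2]) (hθ i).1 (by ring)

theorem ZSpan.lt_encard_image_floor {ι : Type*} [Fintype ι] [MeasurableSpace E]
    (b : Basis ι ℝ E) (μ : Measure E) [μ.IsAddLeftInvariant] {M : Set E} {k : ℕ}
    (h : k * μ (fundamentalDomain b) < μ M) :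
    (k : ℕ∞) < ((fun m => (floor b m : E)) '' M).encard := by
  by_contra! hle
  have hfin := finite_of_encard_le_coe hle
  have hcover : M ⊆ ⋃ z ∈ hfin.toFinset, z +ᵥ fundamentalDomain b := fun m hm =>
    mem_biUnion (hfin.mem_toFinset.mpr ⟨m, hm, rfl⟩)
      ⟨fract b m, fract_mem_fundamentalDomain b m, by simp [fract_apply]⟩
  have hcard : (hfin.toFinset.card : ENNReal) ≤ k := by
    rw [hfin.encard_eq_coe_toFinset_card] at hle
    exact_mod_cast hle
  refine h.not_ge ?_
  calc μ M ≤ ∑ z ∈ hfin.toFinset, μ (z +ᵥ fundamentalDomain b) :=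
        (measure_mono hcover).trans (measure_biUnion_finset_le _ _)
    _ = hfin.toFinset.card * μ (fundamentalDomain b) := by simp [measure_vadd]
    _ ≤ k * μ (fundamentalDomain b) := by gcongr

theorem Convex.lt_encard_zSpan_sub_mem_smul {ι : Type*} [Fintype ι] [MeasurableSpace E]
    [BorelSpace E] [FiniteDimensional ℝ E] (μ : Measure E) [μ.IsAddHaarMeasure] {K : Set E}
    (hK : Convex ℝ K) (b : Basis ι ℝ E) {x₀ : E} {ρ δ : ℝ} (hρ : 0 ≤ ρ) (hδ : 0 ≤ δ)
    (hF : x₀ +ᵥ fundamentalDomain b ⊆ ρ • K) {k : ℕ}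
    (hk : k * μ (fundamentalDomain b) < μ (δ • K)) (t : E) :
    (k : ℕ∞) < {z | z ∈ span ℤ (range b) ∧ t - z ∈ (ρ + δ) • K}.encard := by
  have hM : μ ((t - x₀) +ᵥ (-δ) • K) = μ (δ • K) := by
    rw [measure_vadd, Measure.addHaar_smul, Measure.addHaar_smul, abs_pow, abs_pow, abs_neg]
  refine (lt_encard_image_floor b μ (hk.trans_eq hM.symm)).trans_le (encard_le_encard ?_)
  rintro _ ⟨_, ⟨_, ⟨x, hx, rfl⟩, rfl⟩, rfl⟩
  refine ⟨coe_mem _, ?_⟩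
  set m := (t - x₀) +ᵥ (-δ) • x
  have : t - floor b m = (x₀ + fract b m) + δ • x := by
    rw [fract_apply]
    simp only [m, vadd_eq_add]
    module
  rw [this, hK.add_smul hρ hδ]
  exact add_mem_add (hF ⟨_, fract_mem_fundamentalDomain b m, rfl⟩) (smul_mem_smul_set hx)

end Lattice

section Covering

variable {E : Type*} [AddCommGroup E] [Module ℝ E]

def IsSCovering (s : ℕ) (K Λ : Set E) (r : ℝ) : Prop :=
  ∀ t : E, ∃ b : Fin s → E, Function.Injective b ∧ ∀ i, b i ∈ Λ ∧ ∃ x ∈ K, t = b i + r • x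

theorem IsSCovering.of_subsingleton [Subsingleton E] {s : ℕ} {K Λ : Set E} {r : ℝ}
    (h : IsSCovering s K Λ r) (r' : ℝ) : IsSCovering s K Λ r' := fun t =>
  (h t).imp fun _ hb => ⟨hb.1, fun i =>
    ⟨(hb.2 i).1, (hb.2 i).2.imp fun _ hx => ⟨hx.1, Subsingleton.elim _ _⟩⟩⟩

theorem isSCovering_of_le_encard {s : ℕ} {K Λ : Set E} {r : ℝ}
    (h : ∀ t, (s : ℕ∞) ≤ {z | z ∈ Λ ∧ t - z ∈ r • K}.encard) : IsSCovering s K Λ r := by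
  intro t
  obtain ⟨b, hb, hbA⟩ := Set.exists_injective_forall_mem_of_le_encard (h t)
  refine ⟨b, hb, fun i => ⟨(hbA i).1, ?_⟩⟩
  obtain ⟨x, hx, hxt⟩ := (hbA i).2
  exact ⟨x, hx, eq_add_of_sub_eq' hxt.symm⟩

end Covering

theorem span_int_subset_of_eq_setOf_mulVec {n : ℕ} {B : Matrix (Fin n) (Fin n) ℝ}
    {Λ : Set (Fin n → ℝ)} (hΛ : Λ = {x | ∃ z : Fin n → ℤ, x = B.mulVec fun i => (z i : ℝ)})
    {S : Set (Fin n → ℝ)} (hS : S ⊆ Λ) : (Submodule.span ℤ S : Set (Fin n → ℝ)) ⊆ Λ := by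
  intro x hx
  induction hx using Submodule.span_induction with
  | mem x hx => exact hS hx
  | zero => exact hΛ ▸ ⟨0, by simp [← Pi.zero_def]⟩
  | add x y _ _ hx hy =>
    rw [hΛ] at hx hy ⊢
    obtain ⟨z, rfl⟩ := hx
    obtain ⟨z', rfl⟩ := hy
    exact ⟨z + z', by rw [← Matrix.mulVec_add]; congr 1; ext; simp⟩
  | smul c x _ hx =>
    rw [hΛ] at hx ⊢
    obtain ⟨z, rfl⟩ := hx
    exact ⟨c • z, by
      rw [← Int.cast_smul_eq_zsmul ℝ, ← Matrix.mulVec_smul]; congr 1; ext; simp⟩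

theorem sCoveringRadius_le_sum_successive_minima_general {n s : ℕ} (hs : 1 ≤ s)
    (K : Set (Fin n → ℝ)) (hKcpt : IsCompact K) (hKconv : Convex ℝ K)
    (hKint : (interior K).Nonempty)
    (B : Matrix (Fin n) (Fin n) ℝ)
    (Λ : Set (Fin n → ℝ))
    (hΛ : Λ = {x | ∃ z : Fin n → ℤ, x = B.mulVec fun i => (z i : ℝ)})
    (μ : ℝ)
    (hμ : IsLeast {r : ℝ | 0 < r ∧ ∀ t : Fin n → ℝ,
        ∃ b : Fin s → (Fin n → ℝ), Function.Injective b ∧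
          ∀ i, b i ∈ Λ ∧ ∃ x ∈ K, t = b i + r • x} μ)
    (lam : Fin n → ℝ)
    (hlam : ∀ i : Fin n, IsLeast {l : ℝ | 0 < l ∧
        (i : ℕ) + 1 ≤ Module.finrank ℝ (Submodule.span ℝ ((l • (K - K)) ∩ Λ))} (lam i)) :
    μ ≤ (1 + ((n.factorial : ℝ) ^ ((1 : ℝ) / (n : ℝ)) / (n : ℝ)) *
          ((s : ℝ) - 1) ^ ((1 : ℝ) / (n : ℝ))) * ∑ i, lam i := by
  have hlam₀ : ∀ i, 0 ≤ lam i := fun i => (hlam i).1.1.le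
  have hρ : 0 ≤ ∑ i, lam i := Finset.sum_nonneg fun i _ => hlam₀ i
  rw [← Nat.cast_pred hs, add_mul, one_mul]
  set ερ := (n.factorial : ℝ) ^ ((1 : ℝ) / n) / n * ((s - 1 : ℕ) : ℝ) ^ ((1 : ℝ) / n) * ∑ i, lam i
  have hερ : 0 ≤ ερ := by positivity
  -- the volume count is strict only above `(1 + ε) ρ`, so we cover with every larger radius
  refine le_of_forall_gt_imp_ge_of_dense fun r hr => hμ.2 ⟨(add_nonneg hρ hερ).trans_lt hr, ?_⟩
  change IsSCovering s K Λ r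
  rcases n.eq_zero_or_pos with rfl | hn
  · exact IsSCovering.of_subsingleton hμ.1.2 r
  have : NeZero n := ⟨hn.ne'⟩
  obtain ⟨b, x, y, hx, hy, hb, hbΛ⟩ := exists_basis_of_le_finrank_span fun i => (hlam i).1.2
  have hP := hKconv.vadd_fundamentalDomain_subset b hlam₀
    (Finset.sum_pos (fun i _ => (hlam i).1.1) Finset.univ_nonempty) hx hy hb
  have hvol := hKcpt.natCast_mul_volume_fundamentalDomain_lt hn.ne' hKconv hKint b hlam₀ hx hy hb
    (lt_sub_iff_add_lt'.mpr hr)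
  refine isSCovering_of_le_encard fun t => ?_
  have hcount := hKconv.lt_encard_zSpan_sub_mem_smul volume b hρ
    (sub_nonneg.mpr ((le_add_of_nonneg_right hερ).trans hr.le)) hP hvol t
  calc (s : ℕ∞) = (s - 1 : ℕ) + 1 := by norm_cast; omega
    _ ≤ _ := Order.add_one_le_of_lt hcount
    _ ≤ {z | z ∈ Λ ∧ t - z ∈ r • K}.encard := encard_le_encard fun z hz =>
      ⟨span_int_subset_of_eq_setOf_mulVec hΛ hbΛ hz.1, by simpa using hz.2⟩

/-- **The s-covering radius is bounded by the successive minima**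
(Proposition in Aliev–Fukshansky–Henk). Let `K ⊆ ℝⁿ` be a convex body, `Λ = B·ℤⁿ`
a full-rank lattice, `μ` the `s`-covering radius of `K` with respect to `Λ` and
`lam i` the `i`-th successive minimum `λ_{i+1}(K, Λ)` (the least `l > 0` such that
`l•(K - K) ∩ Λ` spans a subspace of dimension at least `i+1`). Then
`μ ≤ (1 + ((n!)^(1/n)/n) * (s-1)^(1/n)) * (λ₁ + ⋯ + λ_n)`. -/
theorem sCoveringRadius_le_sum_successive_minima {n s : ℕ} (hs : 1 ≤ s)
    (K : Set (Fin n → ℝ)) (hKcpt : IsCompact K) (hKconv : Convex ℝ K)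
    (hKint : (interior K).Nonempty)
    (B : Matrix (Fin n) (Fin n) ℝ) (hB : IsUnit B.det)
    (Λ : Set (Fin n → ℝ))
    (hΛ : Λ = {x | ∃ z : Fin n → ℤ, x = B.mulVec fun i => (z i : ℝ)})
    (μ : ℝ)
    (hμ : IsLeast {r : ℝ | 0 < r ∧ ∀ t : Fin n → ℝ,
        ∃ b : Fin s → (Fin n → ℝ), Function.Injective b ∧
          ∀ i, b i ∈ Λ ∧ ∃ x ∈ K, t = b i + r • x} μ)
    (lam : Fin n → ℝ)
    (hlam : ∀ i : Fin n, IsLeast {l : ℝ | 0 < l ∧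
        (i : ℕ) + 1 ≤ Module.finrank ℝ (Submodule.span ℝ ((l • (K - K)) ∩ Λ))} (lam i)) :
    μ ≤ (1 + ((n.factorial : ℝ) ^ ((1 : ℝ) / (n : ℝ)) / (n : ℝ)) *
          ((s : ℝ) - 1) ^ ((1 : ℝ) / (n : ℝ))) * ∑ i, lam i :=
  sCoveringRadius_le_sum_successive_minima_general hs K hKcpt hKconv hKint B Λ hΛ μ hμ lam hlam
end

section
/- Let n ≥ 3 be an integer. There exists a constant C_n > 0 depending only on n such that for every real T ≥ 1, (1/#G(T)) · Σ_{a ∈ G(T)} (a_1 + a_2 + … + a_n)/(a_1·a_2·…·a_n)^{1/(n-1)} ≤ C_n · T^{-1/(n-1)}, where G(T) = {a ∈ ℤ^n_{>0} : gcd(a_1,…,a_n) = 1, max_i a_i ≤ T}. -/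
/-!
Put `N = ⌊T⌋`, so that `G(T)` is the set of primitive vectors in the box `[1, N]ⁿ`. At least
half of the `Nⁿ` vectors of the box are primitive: those whose entries share a factor `d ≥ 2`
number at most `∑_{d ≥ 2} (N / d)ⁿ ≤ Nⁿ / 2` when `n ≥ 3`. Over the whole box the sum
factorises: with `s = 1 / (n - 1)` it equals `n (∑_{k ≤ N} k^{1-s}) (∑_{k ≤ N} k^{-s})^{n-1}`,
which is at most `n N^{2-s} (N^{1-s} / (1 - s))^{n-1} = n N^{n-s} / (1 - s)^{n-1}` because
`s (n - 1) = 1`. Dividing by `#G(T) ≥ Nⁿ / 2` and using `N ≥ T / 2` gives the bound.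
-/

open Finset

theorem one_sub_mul_rpow_neg_le_rpow_sub_rpow {s x : ℝ} (hs0 : 0 ≤ s) (hs1 : s ≤ 1)
    (hx : 1 ≤ x) :
    (1 - s) * x ^ (-s) ≤ x ^ (1 - s) - (x - 1) ^ (1 - s) := by
  have hx0 : 0 < x := by linarith
  have hinv : x⁻¹ ≤ 1 := inv_le_one_of_one_le₀ hx
  have hbern : (1 + -x⁻¹) ^ (1 - s) ≤ 1 + (1 - s) * -x⁻¹ :=
    rpow_one_add_le_one_add_mul_self (by linarith) (by linarith) (by linarith)
  have hsplit : (x - 1) ^ (1 - s) = x ^ (1 - s) * (1 + -x⁻¹) ^ (1 - s) := by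
    rw [← Real.mul_rpow hx0.le (by linarith)]
    field_simp
    ring_nf
  have hdiv : x ^ (1 - s) * x⁻¹ = x ^ (-s) := by
    rw [← div_eq_mul_inv, ← Real.rpow_sub_one hx0.ne']
    ring_nf
  have : (x - 1) ^ (1 - s) ≤ x ^ (1 - s) - (1 - s) * x ^ (-s) :=
    calc (x - 1) ^ (1 - s) ≤ x ^ (1 - s) * (1 + (1 - s) * -x⁻¹) := by rw [hsplit]; gcongr
      _ = x ^ (1 - s) - (1 - s) * x ^ (-s) := by rw [← hdiv]; ring
  linarith

theorem sum_Icc_rpow_neg_le {s : ℝ} (hs0 : 0 ≤ s) (hs1 : s < 1) (N : ℕ) :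
    ∑ k ∈ Icc 1 N, (k : ℝ) ^ (-s) ≤ (N : ℝ) ^ (1 - s) / (1 - s) := by
  rw [le_div_iff₀ (sub_pos.2 hs1)]
  induction N with
  | zero => simp [Real.zero_rpow (sub_pos.2 hs1).ne']
  | succ N ih =>
    have hstep := one_sub_mul_rpow_neg_le_rpow_sub_rpow hs0 hs1.le (x := N + 1) (by simp)
    rw [sum_Icc_succ_top (by omega), add_mul]
    push_cast
    simp only [add_sub_cancel_right] at hstep
    linarith

theorem sum_Icc_rpow_le {r : ℝ} (hr : 0 ≤ r) (N : ℕ) :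
    ∑ k ∈ Icc 1 N, (k : ℝ) ^ r ≤ N * (N : ℝ) ^ r := by
  calc ∑ k ∈ Icc 1 N, (k : ℝ) ^ r ≤ ∑ _k ∈ Icc 1 N, (N : ℝ) ^ r :=
        sum_le_sum fun k hk ↦ by gcongr; exact_mod_cast (mem_Icc.1 hk).2
    _ = N * (N : ℝ) ^ r := by simp

theorem natFloor_rpow_neg_le {T s : ℝ} (hT : 1 ≤ T) (hs0 : 0 ≤ s) (hs1 : s ≤ 1) :
    (⌊T⌋₊ : ℝ) ^ (-s) ≤ 2 * T ^ (-s) := by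
  have hfloor : T / 2 ≤ ⌊T⌋₊ := by
    have hlt := Nat.lt_floor_add_one T
    have hone : (1 : ℝ) ≤ ⌊T⌋₊ := by exact_mod_cast Nat.le_floor (by exact_mod_cast hT)
    linarith
  calc (⌊T⌋₊ : ℝ) ^ (-s) ≤ (T / 2) ^ (-s) :=
        Real.rpow_le_rpow_of_nonpos (by positivity) hfloor (by linarith)
    _ = 2 ^ s * T ^ (-s) := by
        rw [Real.div_rpow (by positivity) (by norm_num), Real.rpow_neg (by norm_num : (0 : ℝ) ≤ 2)]
        field_simp
    _ ≤ 2 * T ^ (-s) := by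
        gcongr
        calc (2 : ℝ) ^ s ≤ 2 ^ (1 : ℝ) := Real.rpow_le_rpow_of_exponent_le (by norm_num) hs1
          _ = 2 := Real.rpow_one 2

theorem sum_div_prod_rpow_eq_sum_prod {ι : Type*} [Fintype ι] [DecidableEq ι] {a : ι → ℝ}
    (ha : ∀ i, 0 < a i) (s : ℝ) :
    (∑ i, a i) / (∏ i, a i) ^ s = ∑ i, ∏ j, if j = i then a j ^ (1 - s) else a j ^ (-s) := by
  have hterm (i : ι) :
      ∏ j, (if j = i then a j ^ (1 - s) else a j ^ (-s)) = a i * ∏ j, a j ^ (-s) := by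
    calc ∏ j, (if j = i then a j ^ (1 - s) else a j ^ (-s))
        = ∏ j, (if j = i then a j else 1) * a j ^ (-s) := by
          refine prod_congr rfl fun j _ ↦ ?_
          split_ifs
          · rw [sub_eq_add_neg, Real.rpow_add (ha j), Real.rpow_one]
          · rw [one_mul]
      _ = a i * ∏ j, a j ^ (-s) := by rw [prod_mul_distrib, Fintype.prod_ite_eq']
  rw [sum_congr rfl fun i _ ↦ hterm i, ← sum_mul, div_eq_mul_inv,
    Real.finsetProd_rpow _ _ (fun i _ ↦ (ha i).le), Real.rpow_neg (prod_nonneg fun i _ ↦ (ha i).le)]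

theorem prod_ite_eq_mul_pow {ι M : Type*} [Fintype ι] [DecidableEq ι] [CommMonoid M]
    (i : ι) (x y : M) :
    ∏ j, (if j = i then x else y) = x * y ^ (Fintype.card ι - 1) := by
  rw [Fintype.prod_eq_mul_prod_compl i, if_pos rfl,
    prod_congr rfl fun j hj ↦ if_neg (by simpa using hj), prod_const, card_compl, card_singleton]

section Box

variable (ι : Type*) [Fintype ι] [DecidableEq ι]

def posBox (N : ℕ) : Finset (ι → ℕ) := Fintype.piFinset fun _ ↦ Icc 1 N

def primitiveBox (N : ℕ) : Finset (ι → ℕ) := {a ∈ posBox ι N | univ.gcd a = 1}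

variable {ι}

theorem card_posBox (N : ℕ) : #(posBox ι N) = N ^ Fintype.card ι := by
  simp [posBox]

theorem card_piFinset_multiples (N d : ℕ) :
    #(Fintype.piFinset fun _ : ι ↦ {k ∈ Icc 1 N | d ∣ k}) = (N / d) ^ Fintype.card ι := by
  rw [Fintype.card_piFinset, prod_const, card_univ, ← Nat.Ioc_filter_dvd_card_eq_div]
  rfl

theorem posBox_filter_gcd_ne_one_subset [Nonempty ι] (N : ℕ) :
    {a ∈ posBox ι N | univ.gcd a ≠ 1} ⊆
      (Ioo 1 (N + 1)).biUnion fun d ↦ Fintype.piFinset fun _ : ι ↦ {k ∈ Icc 1 N | d ∣ k} := by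
  intro a ha
  obtain ⟨haN, hgcd⟩ := mem_filter.1 ha
  simp only [posBox, Fintype.mem_piFinset, mem_Icc] at haN
  have hdvd (i : ι) : univ.gcd a ∣ a i := gcd_dvd (mem_univ i)
  obtain ⟨i₀⟩ := ‹Nonempty ι›
  have hpos : 0 < univ.gcd a := Nat.pos_of_dvd_of_pos (hdvd i₀) (haN i₀).1
  have hle : univ.gcd a ≤ N := (Nat.le_of_dvd (haN i₀).1 (hdvd i₀)).trans (haN i₀).2
  simp only [mem_biUnion, mem_Ioo, Fintype.mem_piFinset, mem_filter, mem_Icc]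
  exact ⟨univ.gcd a, ⟨by omega, by omega⟩, fun i ↦ ⟨haN i, hdvd i⟩⟩

theorem card_posBox_filter_gcd_ne_one_le (hι : 3 ≤ Fintype.card ι) (N : ℕ) :
    (#{a ∈ posBox ι N | univ.gcd a ≠ 1} : ℝ) ≤ (N : ℝ) ^ Fintype.card ι / 2 := by
  have : Nonempty ι := Fintype.card_pos_iff.1 (by omega)
  set c := Fintype.card ι
  have hterm (d : ℕ) (hd : d ∈ Ioo 1 (N + 1)) :
      (((N / d : ℕ) : ℝ)) ^ c ≤ (N : ℝ) ^ c / 2 * ((d : ℝ) ^ 2)⁻¹ := by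
    have hd2 : (2 : ℝ) ≤ d := by exact_mod_cast (mem_Ioo.1 hd).1
    have hdc : 2 * (d : ℝ) ^ 2 ≤ (d : ℝ) ^ c :=
      calc 2 * (d : ℝ) ^ 2 ≤ (d : ℝ) ^ 3 := by nlinarith
        _ ≤ (d : ℝ) ^ c := pow_le_pow_right₀ (by linarith) hι
    calc (((N / d : ℕ) : ℝ)) ^ c ≤ ((N : ℝ) / d) ^ c := by gcongr; exact Nat.cast_div_le
      _ = (N : ℝ) ^ c / (d : ℝ) ^ c := div_pow _ _ _
      _ ≤ (N : ℝ) ^ c / (2 * (d : ℝ) ^ 2) := by gcongr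
      _ = (N : ℝ) ^ c / 2 * ((d : ℝ) ^ 2)⁻¹ := by ring
  calc (#{a ∈ posBox ι N | univ.gcd a ≠ 1} : ℝ)
      ≤ ∑ d ∈ Ioo 1 (N + 1), (((N / d : ℕ) : ℝ)) ^ c := by
        have := (card_le_card (posBox_filter_gcd_ne_one_subset (ι := ι) N)).trans card_biUnion_le
        simp only [card_piFinset_multiples] at this
        exact_mod_cast this
    _ ≤ ∑ d ∈ Ioo 1 (N + 1), (N : ℝ) ^ c / 2 * ((d : ℝ) ^ 2)⁻¹ := sum_le_sum hterm
    _ = (N : ℝ) ^ c / 2 * ∑ d ∈ Ioo 1 (N + 1), ((d : ℝ) ^ 2)⁻¹ := (mul_sum _ _ _).symm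
    _ ≤ (N : ℝ) ^ c / 2 * 1 := by
        gcongr
        simpa [one_add_one_eq_two] using sum_Ioo_inv_sq_le (α := ℝ) 1 (N + 1)
    _ = (N : ℝ) ^ c / 2 := mul_one _

theorem half_pow_le_card_primitiveBox (hι : 3 ≤ Fintype.card ι) (N : ℕ) :
    (N : ℝ) ^ Fintype.card ι / 2 ≤ #(primitiveBox ι N) := by
  have hsplit := card_filter_add_card_filter_not (s := posBox ι N) (fun a ↦ univ.gcd a = 1)
  rw [card_posBox] at hsplit
  have hcast : (#(primitiveBox ι N) : ℝ) + #{a ∈ posBox ι N | univ.gcd a ≠ 1} =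
      (N : ℝ) ^ Fintype.card ι := by exact_mod_cast hsplit
  linarith [card_posBox_filter_gcd_ne_one_le hι N]

theorem sum_posBox_sum_div_prod_rpow (s : ℝ) (N : ℕ) :
    ∑ a ∈ posBox ι N, (∑ i, (a i : ℝ)) / (∏ i, (a i : ℝ)) ^ s =
      Fintype.card ι * (∑ k ∈ Icc 1 N, (k : ℝ) ^ (1 - s)) *
        (∑ k ∈ Icc 1 N, (k : ℝ) ^ (-s)) ^ (Fintype.card ι - 1) := by
  have hpos {a : ι → ℕ} (ha : a ∈ posBox ι N) (i : ι) : (0 : ℝ) < a i := by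
    simp only [posBox, Fintype.mem_piFinset, mem_Icc] at ha
    exact_mod_cast (ha i).1
  calc ∑ a ∈ posBox ι N, (∑ i, (a i : ℝ)) / (∏ i, (a i : ℝ)) ^ s
      = ∑ a ∈ posBox ι N, ∑ i, ∏ j,
          (fun k : ℕ ↦ if j = i then (k : ℝ) ^ (1 - s) else (k : ℝ) ^ (-s)) (a j) :=
        sum_congr rfl fun a ha ↦ by
          simp only [sum_div_prod_rpow_eq_sum_prod (hpos ha)]
    _ = ∑ i, ∏ j, ∑ k ∈ Icc 1 N, if j = i then (k : ℝ) ^ (1 - s) else (k : ℝ) ^ (-s) := by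
        rw [sum_comm]
        exact sum_congr rfl fun i _ ↦ sum_prod_piFinset (Icc 1 N) fun j k ↦
          if j = i then (k : ℝ) ^ (1 - s) else (k : ℝ) ^ (-s)
    _ = ∑ _i : ι, (∑ k ∈ Icc 1 N, (k : ℝ) ^ (1 - s)) *
          (∑ k ∈ Icc 1 N, (k : ℝ) ^ (-s)) ^ (Fintype.card ι - 1) := by
        refine sum_congr rfl fun i _ ↦ ?_
        rw [← prod_ite_eq_mul_pow i]
        exact prod_congr rfl fun j _ ↦ by split_ifs <;> rfl
    _ = _ := by rw [sum_const, card_univ, nsmul_eq_mul, mul_assoc]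

end Box

theorem average_primitiveBox_le {n : ℕ} (hn : 3 ≤ n) {s : ℝ} (hs : s * ((n : ℝ) - 1) = 1)
    {N : ℕ} (hN : 1 ≤ N) :
    (1 / #(primitiveBox (Fin n) N) : ℝ) *
        ∑ a ∈ primitiveBox (Fin n) N, (∑ i, (a i : ℝ)) / (∏ i, (a i : ℝ)) ^ s
      ≤ 2 * n / (1 - s) ^ (n - 1) * (N : ℝ) ^ (-s) := by
  have hn' : (3 : ℝ) ≤ n := by exact_mod_cast hn
  have hs0 : 0 < s := pos_of_mul_pos_left (hs ▸ one_pos) (by linarith)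
  have hs1 : s < 1 := by nlinarith
  have hN0 : (0 : ℝ) < N := by exact_mod_cast hN
  have hcard : (N : ℝ) ^ n / 2 ≤ #(primitiveBox (Fin n) N) := by
    simpa using half_pow_le_card_primitiveBox (ι := Fin n) (by simpa) N
  have hinv : (1 / #(primitiveBox (Fin n) N) : ℝ) ≤ 2 / (N : ℝ) ^ n := by
    rw [div_le_div_iff₀ (by linarith [pow_pos hN0 n]) (by positivity)]
    linarith
  have hsum : ∑ a ∈ primitiveBox (Fin n) N, (∑ i, (a i : ℝ)) / (∏ i, (a i : ℝ)) ^ s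
      ≤ n * (N * (N : ℝ) ^ (1 - s)) * ((N : ℝ) ^ (1 - s) / (1 - s)) ^ (n - 1) :=
    calc _ ≤ ∑ a ∈ posBox (Fin n) N, (∑ i, (a i : ℝ)) / (∏ i, (a i : ℝ)) ^ s :=
          sum_le_sum_of_subset_of_nonneg (filter_subset _ _) fun a _ _ ↦ by positivity
      _ = n * (∑ k ∈ Icc 1 N, (k : ℝ) ^ (1 - s)) *
            (∑ k ∈ Icc 1 N, (k : ℝ) ^ (-s)) ^ (n - 1) := by
          simpa using sum_posBox_sum_div_prod_rpow (ι := Fin n) s N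
      _ ≤ _ := by
          gcongr
          · exact sum_Icc_rpow_le (by linarith) N
          · exact sum_Icc_rpow_neg_le hs0.le hs1 N
  have hexp :
      (N : ℝ) * (N : ℝ) ^ (1 - s) * ((N : ℝ) ^ (1 - s)) ^ (n - 1) = (N : ℝ) ^ n * N ^ (-s) := by
    rw [← Real.rpow_natCast _ (n - 1), ← Real.rpow_mul hN0.le, ← Real.rpow_natCast _ n,
      ← Real.rpow_one_add' hN0.le (by linarith), ← Real.rpow_add hN0, ← Real.rpow_add hN0]
    congr 1
    push_cast [Nat.cast_sub (by omega : 1 ≤ n)]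
    linarith
  calc _ ≤ 2 / (N : ℝ) ^ n *
          (n * (N * (N : ℝ) ^ (1 - s)) * ((N : ℝ) ^ (1 - s) / (1 - s)) ^ (n - 1)) := by
        gcongr
    _ = 2 * n / (1 - s) ^ (n - 1) *
          ((N * (N : ℝ) ^ (1 - s) * ((N : ℝ) ^ (1 - s)) ^ (n - 1)) / (N : ℝ) ^ n) := by
        rw [div_pow]
        ring
    _ = 2 * n / (1 - s) ^ (n - 1) * (N : ℝ) ^ (-s) := by
        rw [hexp, mul_div_cancel_left₀ _ (by positivity)]

/-- **Average of `(a₁+⋯+aₙ)/(a₁⋯aₙ)^(1/(n-1))` over primitive vectors**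
(from Proposition 1 of Aliev–Henk–Hinrichs, as used in Aliev–Fukshansky–Henk).
For `n ≥ 3` there is a constant `C = C_n > 0` such that for every `T ≥ 1`, the average
over `G(T)` (primitive positive integer vectors with `max aᵢ ≤ T`) of
`(a₁ + ⋯ + aₙ)/(a₁⋯aₙ)^(1/(n-1))` is at most `C · T^(-1/(n-1))`. -/
theorem average_sum_div_prod_bound {n : ℕ} (hn : 3 ≤ n) :
    ∃ C : ℝ, 0 < C ∧
      ∀ T : ℝ, 1 ≤ T →
      ∀ G : Finset (Fin n → ℕ),
        (∀ a, a ∈ G ↔ ((∀ i, 0 < a i) ∧ Finset.univ.gcd a = 1 ∧ ∀ i, (a i : ℝ) ≤ T)) →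
        (1 / (G.card : ℝ)) * ∑ a ∈ G,
            (∑ i, (a i : ℝ)) / (∏ i, (a i : ℝ)) ^ ((1 : ℝ) / ((n : ℝ) - 1))
          ≤ C * T ^ (-((1 : ℝ) / ((n : ℝ) - 1))) := by
  set s : ℝ := 1 / ((n : ℝ) - 1)
  have hn' : (3 : ℝ) ≤ n := by exact_mod_cast hn
  have hs : s * ((n : ℝ) - 1) = 1 := one_div_mul_cancel (by linarith)
  have hs0 : 0 < s := one_div_pos.2 (by linarith)
  have hs1 : s < 1 := by nlinarith
  refine ⟨4 * n / (1 - s) ^ (n - 1), by have := sub_pos.2 hs1; positivity,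
    fun T hT G hG ↦ ?_⟩
  obtain rfl : G = primitiveBox (Fin n) ⌊T⌋₊ := by
    ext a
    simp only [hG, primitiveBox, posBox, mem_filter, Fintype.mem_piFinset, mem_Icc,
      Nat.le_floor_iff (by linarith : (0 : ℝ) ≤ T), Nat.one_le_iff_ne_zero, Nat.pos_iff_ne_zero,
      forall_and]
    tauto
  calc _ ≤ 2 * n / (1 - s) ^ (n - 1) * (⌊T⌋₊ : ℝ) ^ (-s) :=
        average_primitiveBox_le hn hs ((Nat.one_le_floor_iff T).2 hT)
    _ ≤ 2 * n / (1 - s) ^ (n - 1) * (2 * T ^ (-s)) := by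
        gcongr
        exact natFloor_rpow_neg_le hT hs0.le hs1.le
    _ = 4 * n / (1 - s) ^ (n - 1) * T ^ (-s) := by ring
end
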